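/- Let K be a positive integer, let m_1, …, m_K be real numbers with Σ_{k=1}^K m_k² ≤ C for some constant C ≥ 0, and let s_1², …, s_K² ≥ 0 be nonnegative reals. Then Σ_{k=1}^K erf( m_k / √(1 + 2 s_k²) )² ≤ K · (1 − exp(−(4/π) C / K)). -/

import Mathlib

noncomputable def erf (z : ℝ) : ℝ :=
  ∫ t in (0 : ℝ)..z, 2 / Real.sqrt Real.pi * Real.exp (-t ^ 2)

/-!
For `F x = ∫₀¹ exp(-x²(1+t²)) / (1+t²) dt` (`feynmanIntegral`), differentiation under the
integral sign and the substitution `s = x t` show that `erf x ^ 2 + (4/π) F x` is constant, equal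
to its value `1` at `x = 0`. The measure `(4/π) dt / (1+t²)` on `[0,1]` is a probability measure
under which `x²(1+t²)` has mean `(4/π) x²`, so Jensen's inequality (in tangent-line form) gives
`(4/π) F x ≥ exp(-(4/π) x²)`, i.e. `erf x ^ 2 ≤ 1 - exp(-(4/π) x²)`. Dividing `m_k` by
`√(1 + 2 s_k²) ≥ 1` only shrinks the argument, and concavity of `y ↦ 1 - exp(-y)` bounds the
sum by its value at the mean `(4/π) C / K`.
-/

open Real intervalIntegral

lemma exp_mul_sub_add_one_le_exp (a b : ℝ) : exp b * (a - b + 1) ≤ exp a := by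
  calc exp b * (a - b + 1) ≤ exp b * exp (a - b) := by gcongr; exact add_one_le_exp _
    _ = exp a := by rw [← exp_add]; ring_nf

lemma sum_one_sub_exp_neg_le {ι : Type*} (s : Finset ι) (y : ι → ℝ) {C : ℝ}
    (hy : ∑ i ∈ s, y i ≤ C) :
    ∑ i ∈ s, (1 - exp (-y i)) ≤ (s.card : ℝ) * (1 - exp (-(C / s.card))) := by
  rcases s.eq_empty_or_nonempty with rfl | hs
  · simp
  have hn : (s.card : ℝ) ≠ 0 := by simp [hs.ne_empty]
  set b := -(C / s.card)
  have htangent : s.card * exp b ≤ ∑ i ∈ s, exp (-y i) :=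
    calc s.card * exp b ≤ ∑ i ∈ s, exp b * (-y i - b + 1) := by
          rw [← Finset.mul_sum, mul_comm]
          gcongr
          simp only [b, Finset.sum_add_distrib, Finset.sum_sub_distrib, Finset.sum_neg_distrib,
            Finset.sum_const, nsmul_eq_mul, mul_one, mul_div_cancel₀ _ hn]
          linarith
      _ ≤ ∑ i ∈ s, exp (-y i) := Finset.sum_le_sum fun i _ ↦ exp_mul_sub_add_one_le_exp _ _
  simp only [Finset.sum_sub_distrib, Finset.sum_const, nsmul_eq_mul, mul_one]
  linarith

lemma erf_zero : erf 0 = 0 := by simp [erf]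

lemma hasDerivAt_erf (x : ℝ) : HasDerivAt erf (2 / √π * exp (-x ^ 2)) x := by
  have hc : Continuous fun t : ℝ ↦ 2 / √π * exp (-t ^ 2) := by fun_prop
  exact integral_hasDerivAt_right (hc.intervalIntegrable _ _) (hc.stronglyMeasurableAtFilter _ _)
    hc.continuousAt

lemma integral_mul_exp_neg_mul_sq (x : ℝ) :
    ∫ t in (0 : ℝ)..1, x * exp (-(x * t) ^ 2) = √π / 2 * erf x := by
  have hπ : √π ≠ 0 := (sqrt_pos.2 pi_pos).ne'
  rw [integral_const_mul, mul_integral_comp_mul_left (f := fun s ↦ exp (-s ^ 2)), erf,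
    integral_const_mul]
  field_simp
  simp

noncomputable def feynmanIntegral (x : ℝ) : ℝ :=
  ∫ t in (0 : ℝ)..1, exp (-(x ^ 2 * (1 + t ^ 2))) / (1 + t ^ 2)

lemma feynmanIntegral_zero : feynmanIntegral 0 = π / 4 := by
  simp [feynmanIntegral]

lemma hasDerivAt_exp_neg_sq_mul_div (c x : ℝ) (hc : c ≠ 0) :
    HasDerivAt (fun y ↦ exp (-(y ^ 2 * c)) / c) (-2 * x * exp (-(x ^ 2 * c))) x := by
  refine ((((hasDerivAt_pow 2 x).mul_const c).fun_neg.exp).div_const c).congr_deriv ?_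
  field_simp
  ring

lemma continuous_feynmanIntegrand (y : ℝ) :
    Continuous fun t : ℝ ↦ exp (-(y ^ 2 * (1 + t ^ 2))) / (1 + t ^ 2) :=
  .div (by fun_prop) (by fun_prop) fun t ↦ by positivity

lemma hasDerivAt_feynmanIntegral (x : ℝ) :
    HasDerivAt feynmanIntegral (-√π * exp (-x ^ 2) * erf x) x := by
  have hbound (t y : ℝ) (hy : y ∈ Metric.ball x 1) :
      ‖-2 * y * exp (-(y ^ 2 * (1 + t ^ 2)))‖ ≤ 2 * (|x| + 1) := by
    rw [Metric.mem_ball, dist_eq] at hy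
    have hy' : |y| ≤ |x| + 1 := by linarith [abs_sub_abs_le_abs_sub y x]
    have hexp : exp (-(y ^ 2 * (1 + t ^ 2))) ≤ 1 :=
      exp_le_one_iff.2 (neg_nonpos.2 (by positivity))
    rw [norm_mul, norm_mul, norm_neg, norm_two, norm_eq_abs, norm_of_nonneg (exp_pos _).le]
    nlinarith [abs_nonneg y]
  have hderiv := (hasDerivAt_integral_of_dominated_loc_of_deriv_le (μ := MeasureTheory.volume)
    (F' := fun y t ↦ -2 * y * exp (-(y ^ 2 * (1 + t ^ 2)))) (Metric.ball_mem_nhds x one_pos)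
    (.of_forall fun y ↦ (continuous_feynmanIntegrand y).aestronglyMeasurable)
    ((continuous_feynmanIntegrand x).intervalIntegrable 0 1)
    (by fun_prop : Continuous _).aestronglyMeasurable
    (.of_forall fun t _ y hy ↦ hbound t y hy) intervalIntegrable_const
    (.of_forall fun t _ y _ ↦ hasDerivAt_exp_neg_sq_mul_div _ y (by positivity))).2
  refine hderiv.congr_deriv ?_
  have hsplit (t : ℝ) : -2 * x * exp (-(x ^ 2 * (1 + t ^ 2)))
      = -2 * exp (-x ^ 2) * (x * exp (-(x * t) ^ 2)) := by
    rw [show -(x ^ 2 * (1 + t ^ 2)) = -x ^ 2 + -(x * t) ^ 2 by ring, exp_add]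
    ring
  simp_rw [hsplit]
  rw [integral_const_mul, integral_mul_exp_neg_mul_sq]
  ring

lemma erf_sq_add_feynmanIntegral (x : ℝ) : erf x ^ 2 + 4 / π * feynmanIntegral x = 1 := by
  have hderiv (y : ℝ) : HasDerivAt (fun y ↦ erf y ^ 2 + 4 / π * feynmanIntegral y) 0 y := by
    refine (((hasDerivAt_erf y).fun_pow 2).fun_add
      ((hasDerivAt_feynmanIntegral y).const_mul (4 / π))).congr_deriv ?_
    have hπ : √π ^ 2 = π := sq_sqrt pi_pos.le
    have hπ0 : √π ≠ 0 := (sqrt_pos.2 pi_pos).ne'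
    field_simp
    linear_combination (-4 * exp (-y ^ 2) * erf y) * hπ
  have hconst := is_const_of_deriv_eq_zero (fun y ↦ (hderiv y).differentiableAt)
    (fun y ↦ (hderiv y).deriv) x 0
  simp only [hconst, erf_zero, feynmanIntegral_zero]
  field_simp
  norm_num

lemma exp_neg_le_mul_feynmanIntegral (x : ℝ) :
    exp (-(4 / π * x ^ 2)) ≤ 4 / π * feynmanIntegral x := by
  set c := 4 / π with hc
  have hcπ : c * (π / 4) = 1 := by rw [hc]; field_simp
  have htangent (t : ℝ) :
      exp (-(c * x ^ 2)) * ((1 + c * x ^ 2) * (1 + t ^ 2)⁻¹ - x ^ 2)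
        ≤ exp (-(x ^ 2 * (1 + t ^ 2))) / (1 + t ^ 2) := by
    have ht : 0 < 1 + t ^ 2 := by positivity
    calc exp (-(c * x ^ 2)) * ((1 + c * x ^ 2) * (1 + t ^ 2)⁻¹ - x ^ 2)
        = exp (-(c * x ^ 2)) * (-(x ^ 2 * (1 + t ^ 2)) - -(c * x ^ 2) + 1) / (1 + t ^ 2) := by
          field_simp; ring
      _ ≤ exp (-(x ^ 2 * (1 + t ^ 2))) / (1 + t ^ 2) := by
          gcongr; exact exp_mul_sub_add_one_le_exp _ _
  have hmean :
      ∫ t in (0 : ℝ)..1, exp (-(c * x ^ 2)) * ((1 + c * x ^ 2) * (1 + t ^ 2)⁻¹ - x ^ 2)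
        = exp (-(c * x ^ 2)) * (π / 4) := by
    have : Continuous fun t : ℝ ↦ (1 + t ^ 2)⁻¹ := by fun_prop (disch := intro; positivity)
    rw [integral_const_mul, integral_sub ((this.intervalIntegrable 0 1).const_mul _)
      intervalIntegrable_const, integral_const_mul, integral_inv_one_add_sq]
    simp only [arctan_one, arctan_zero, sub_zero, integral_const, smul_eq_mul, one_mul]
    linear_combination (exp (-(c * x ^ 2)) * x ^ 2) * hcπ
  have hint := integral_mono (μ := MeasureTheory.volume) zero_le_one
    (Continuous.intervalIntegrable (by fun_prop (disch := intro; positivity)) 0 1)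
    ((continuous_feynmanIntegrand x).intervalIntegrable 0 1) htangent
  rw [hmean] at hint
  calc exp (-(c * x ^ 2)) = c * (exp (-(c * x ^ 2)) * (π / 4)) := by
        linear_combination -exp (-(c * x ^ 2)) * hcπ
    _ ≤ c * feynmanIntegral x := by gcongr; exact hint

lemma erf_sq_le_one_sub_exp (x : ℝ) : erf x ^ 2 ≤ 1 - exp (-(4 / π * x ^ 2)) := by
  linarith [erf_sq_add_feynmanIntegral x, exp_neg_le_mul_feynmanIntegral x]

lemma sq_div_sqrt_le_sq (x : ℝ) {d : ℝ} (hd : 1 ≤ d) : (x / √d) ^ 2 ≤ x ^ 2 := by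
  rw [div_pow, sq_sqrt (by linarith)]
  exact div_le_self (sq_nonneg x) hd

theorem sum_erf_sq_le_general (K : ℕ) (m : Fin K → ℝ) (s2 : Fin K → ℝ)
    (hs2 : ∀ k, 0 ≤ s2 k) (C : ℝ) (hm : ∑ k, m k ^ 2 ≤ C) :
    ∑ k, erf (m k / Real.sqrt (1 + 2 * s2 k)) ^ 2 ≤
      (K : ℝ) * (1 - Real.exp (-(4 / Real.pi) * C / (K : ℝ))) := by
  have herf (k : Fin K) :
      erf (m k / √(1 + 2 * s2 k)) ^ 2 ≤ 1 - exp (-(4 / π * m k ^ 2)) := by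
    have := sq_div_sqrt_le_sq (m k) (by linarith [hs2 k] : 1 ≤ 1 + 2 * s2 k)
    refine (erf_sq_le_one_sub_exp _).trans ?_
    gcongr
  have hsum : ∑ k, 4 / π * m k ^ 2 ≤ 4 / π * C := by
    rw [← Finset.mul_sum]; gcongr
  calc ∑ k, erf (m k / √(1 + 2 * s2 k)) ^ 2 ≤ ∑ k, (1 - exp (-(4 / π * m k ^ 2))) :=
        Finset.sum_le_sum fun k _ ↦ herf k
    _ ≤ K * (1 - exp (-(4 / π * C / K))) := by
        simpa using sum_one_sub_exp_neg_le Finset.univ _ hsum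
    _ = K * (1 - exp (-(4 / π) * C / K)) := by rw [neg_mul, neg_div]

/-- If `Σ_k m_k² ≤ C` with `C ≥ 0` and `s_k² ≥ 0`, then
`Σ_k erf(m_k / √(1 + 2 s_k²))² ≤ K (1 − exp(−(4/π) C / K))`. -/
theorem sum_erf_sq_le (K : ℕ) (hK : 0 < K) (m : Fin K → ℝ) (s2 : Fin K → ℝ)
    (hs2 : ∀ k, 0 ≤ s2 k) (C : ℝ) (hC : 0 ≤ C) (hm : ∑ k, m k ^ 2 ≤ C) :
    ∑ k, erf (m k / Real.sqrt (1 + 2 * s2 k)) ^ 2 ≤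
      (K : ℝ) * (1 - Real.exp (-(4 / Real.pi) * C / (K : ℝ))) :=
  sum_erf_sq_le_general K m s2 hs2 C hm
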